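/- arXiv:1910.06817 — 3 statements merged into one kernel-verified Lean document; each statement's English description precedes it below -/
import Mathlib

section
/- For every rational number r that is not a nonpositive integer, 1/Γ(r) lies in the subring of ℂ generated by the algebraic numbers, 1/π, and the values Γ^{(n)}(q) for n ≥ 0 and q ∈ ℚ \ ℤ_{≤0}. -/
open Complex

/-- The ring `𝐇` generated by the algebraic numbers, `1/π`, and the values
`Γ^{(n)}(q)` for `n ∈ ℕ` and `q ∈ ℚ` not a nonpositive integer. -/
noncomputable def Hring : Subring ℂ :=
  Subring.closure ({z : ℂ | IsAlgebraic ℚ z} ∪ {((Real.pi : ℂ))⁻¹} ∪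
    {z : ℂ | ∃ (n : ℕ) (q : ℚ), (∀ k : ℕ, (q : ℂ) ≠ -(k : ℂ)) ∧
      z = iteratedDeriv n Complex.Gamma (q : ℂ)})

/-- An element whose `N`-th power is `1` (with `N > 0`) is integral over `ℚ`. -/
lemma isIntegral_of_pow_eq_one {z : ℂ} {N : ℕ} (hN : 0 < N) (h : z ^ N = 1) :
    IsIntegral ℚ z := by
  refine ⟨Polynomial.X ^ N - Polynomial.C 1, ?_, ?_⟩
  · apply Polynomial.monic_X_pow_sub_C _ hN.ne'
  · simp [h]

/-- `exp (π * r * I)` raised to the `2 * r.den` power is `1`. -/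
lemma exp_pi_rat_I_pow (r : ℚ) :
    Complex.exp ((Real.pi : ℂ) * (r : ℂ) * I) ^ (2 * r.den) = 1 := by
  rw [← Complex.exp_nat_mul]
  have hden : (r : ℂ) * ((r.den : ℕ) : ℂ) = ((r.num : ℤ) : ℂ) := by
    exact_mod_cast congrArg (fun q : ℚ => (q : ℂ)) (Rat.mul_den_eq_num r)
  have : ((2 * r.den : ℕ) : ℂ) * ((Real.pi : ℂ) * (r : ℂ) * I)
      = (r.num : ℂ) * (2 * (Real.pi : ℂ) * I) := by
    push_cast
    linear_combination (2 * (Real.pi : ℂ) * I) * hden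
  rw [this, Complex.exp_int_mul_two_pi_mul_I]

lemma isAlgebraic_sin_pi_rat (r : ℚ) : IsAlgebraic ℚ (Complex.sin ((Real.pi : ℂ) * (r : ℂ))) := by
  rw [isAlgebraic_iff_isIntegral]
  have hN : 0 < 2 * r.den := by positivity
  have h1 : IsIntegral ℚ (Complex.exp ((Real.pi : ℂ) * (r : ℂ) * I)) :=
    isIntegral_of_pow_eq_one hN (exp_pi_rat_I_pow r)
  have h2 : IsIntegral ℚ (Complex.exp (-((Real.pi : ℂ) * (r : ℂ)) * I)) := by
    apply isIntegral_of_pow_eq_one hN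
    have h := exp_pi_rat_I_pow (-r)
    rw [Rat.neg_den] at h
    rw [show ((-r : ℚ) : ℂ) = -(r : ℂ) by push_cast; ring] at h
    rw [show -((Real.pi : ℂ) * (r : ℂ)) * I = (Real.pi : ℂ) * (-(r : ℂ)) * I by ring]
    exact h
  have hI : IsIntegral ℚ (I : ℂ) := by
    refine ⟨Polynomial.X ^ 2 + Polynomial.C 1, ?_, ?_⟩
    · apply Polynomial.monic_X_pow_add_C _ (by norm_num)
    · simp [Complex.I_sq]
  have h2inv : IsIntegral ℚ ((2 : ℂ)⁻¹) := by
    have : ((2 : ℂ))⁻¹ = algebraMap ℚ ℂ (2⁻¹) := by push_cast; norm_num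
    rw [this]
    exact isIntegral_algebraMap
  have : Complex.sin ((Real.pi : ℂ) * (r : ℂ)) =
      (Complex.exp (-((Real.pi : ℂ) * (r : ℂ)) * I)
        - Complex.exp ((Real.pi : ℂ) * (r : ℂ) * I)) * I * (2 : ℂ)⁻¹ := by
    rw [Complex.sin]
    ring
  rw [this]
  exact ((h2.sub h1).mul hI).mul h2inv

theorem inv_Gamma_mem_Hring (r : ℚ) (hr : ∀ k : ℕ, (r : ℂ) ≠ -(k : ℂ)) :
    (Complex.Gamma (r : ℂ))⁻¹ ∈ Hring := by
  by_cases hden : r.den = 1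
  · -- r is an integer; by hr it is a positive integer, so Γ(r)⁻¹ is rational.
    obtain ⟨n, hn⟩ : ∃ n : ℤ, r = (n : ℚ) := ⟨r.num, by rw [← Rat.num_div_den r, hden]; simp⟩
    have hpos : 0 < n := by
      by_contra h
      push_neg at h
      refine hr (-n).toNat ?_
      rw [hn]
      have h2 : (((-n).toNat : ℕ) : ℂ) = -(n : ℂ) := by
        exact_mod_cast congrArg (fun m : ℤ => (m : ℂ)) (Int.toNat_of_nonneg (by omega : (0:ℤ) ≤ -n))
      rw [h2]
      push_cast
      ring
    obtain ⟨m, hm⟩ : ∃ m : ℕ, n = (m : ℤ) + 1 := ⟨(n - 1).toNat, by omega⟩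
    have : (r : ℂ) = (m : ℂ) + 1 := by rw [hn, hm]; push_cast; ring
    rw [this, Complex.Gamma_nat_eq_factorial m]
    have : ((m.factorial : ℂ))⁻¹ = (((m.factorial : ℚ)⁻¹ : ℚ) : ℂ) := by push_cast; ring
    rw [this]
    exact Subring.subset_closure (Or.inl (Or.inl (isAlgebraic_rat ℚ _)))
  · -- r is not an integer: use the reflection formula.
    have hnotint : ∀ n : ℤ, (r : ℚ) ≠ (n : ℚ) := by
      intro n h
      exact hden (by rw [h]; exact Rat.den_intCast n)
    have hsin : Complex.sin ((Real.pi : ℂ) * (r : ℂ)) ≠ 0 := by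
      rw [Complex.sin_ne_zero_iff]
      intro k h
      apply hnotint k
      have hπ : (Real.pi : ℂ) ≠ 0 := by
        exact_mod_cast Real.pi_ne_zero
      have : (r : ℂ) = (k : ℂ) := mul_left_cancel₀ hπ (by linear_combination h)
      exact_mod_cast this
    have hΓ1 : Complex.Gamma (1 - (r : ℂ)) ≠ 0 := by
      apply Complex.Gamma_ne_zero
      intro m h
      apply hnotint (1 + m)
      have : (r : ℂ) = 1 + (m : ℂ) := by
        have := h; linear_combination -this
      exact_mod_cast this
    have hπ : (Real.pi : ℂ) ≠ 0 := by exact_mod_cast Real.pi_ne_zero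
    have hrefl' : Complex.Gamma (r : ℂ) * Complex.Gamma (1 - (r : ℂ))
        * Complex.sin ((Real.pi : ℂ) * (r : ℂ)) = (Real.pi : ℂ) := by
      rw [Complex.Gamma_mul_Gamma_one_sub]
      exact div_mul_cancel₀ _ hsin
    have key : (Complex.Gamma (r : ℂ))⁻¹ =
        Complex.sin ((Real.pi : ℂ) * (r : ℂ)) * Complex.Gamma (1 - (r : ℂ))
          * ((Real.pi : ℂ))⁻¹ := by
      refine inv_eq_of_mul_eq_one_right ?_
      field_simp
      linear_combination hrefl'
    rw [key]
    have h1 : Complex.sin ((Real.pi : ℂ) * (r : ℂ)) ∈ Hring :=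
      Subring.subset_closure (Or.inl (Or.inl (isAlgebraic_sin_pi_rat r)))
    have h2 : ((Real.pi : ℂ))⁻¹ ∈ Hring :=
      Subring.subset_closure (Or.inl (Or.inr rfl))
    have h3 : Complex.Gamma (1 - (r : ℂ)) ∈ Hring := by
      apply Subring.subset_closure
      right
      refine ⟨0, 1 - r, ?_, ?_⟩
      · intro k h
        apply hnotint (1 + k)
        have : ((1 - r : ℚ) : ℂ) = -(k : ℂ) := h
        push_cast at this
        have : (r : ℂ) = 1 + (k : ℂ) := by linear_combination -this
        exact_mod_cast this
      · rw [iteratedDeriv_zero]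
        push_cast
        rfl
    exact Subring.mul_mem _ (Subring.mul_mem _ h1 h3) h2
end

section
/- For every rational r not a nonpositive integer, Γ(r) is a unit of the ring 𝐇, i.e. both Γ(r) ∈ 𝐇 and 1/Γ(r) ∈ 𝐇. -/
open Complex

lemma alg_mem_Hring {z : ℂ} (hz : IsAlgebraic ℚ z) : z ∈ Hring :=
  Subring.subset_closure (Or.inl (Or.inl hz))

lemma pi_inv_mem_Hring : ((Real.pi : ℂ))⁻¹ ∈ Hring :=
  Subring.subset_closure (Or.inl (Or.inr rfl))

lemma gamma_mem_Hring (q : ℚ) (hq : ∀ k : ℕ, (q : ℂ) ≠ -(k : ℂ)) :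
    Complex.Gamma (q : ℂ) ∈ Hring :=
  Subring.subset_closure (Or.inr ⟨0, q, hq, by simp [iteratedDeriv_zero]⟩)

lemma num_eq_aux (r : ℚ) : ((r : ℂ)) * (r.den : ℂ) = (r.num : ℂ) := by
  have hq : (r : ℚ) * (r.den : ℚ) = (r.num : ℚ) := by
    have h := div_mul_cancel₀ (r.num : ℚ) (b := (r.den : ℚ))
      (by exact_mod_cast r.den_nz)
    rw [Rat.num_div_den] at h
    exact h
  exact_mod_cast congrArg (Rat.cast : ℚ → ℂ) hq

lemma exp_pow_aux (r : ℚ) : Complex.exp (Real.pi * r * I) ^ (2 * r.den) = 1 := by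
  have : Complex.exp (Real.pi * r * I) ^ (2 * r.den)
      = Complex.exp (r.num * (2 * Real.pi * I)) := by
    rw [← Complex.exp_nat_mul]
    congr 1
    push_cast
    rw [show ((2 : ℂ) * r.den) * (Real.pi * r * I) = (r * r.den) * (2 * Real.pi * I) by ring,
      num_eq_aux r]
  rw [this, Complex.exp_int_mul_two_pi_mul_I]

lemma exp_integral (r : ℚ) : IsIntegral ℚ (Complex.exp (Real.pi * r * I)) := by
  refine ⟨Polynomial.X ^ (2 * r.den) - Polynomial.C 1, ?_, ?_⟩
  · exact Polynomial.monic_X_pow_sub_C 1 (by positivity)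
  · simp [exp_pow_aux r]

lemma sin_pi_rat_algebraic (r : ℚ) : IsAlgebraic ℚ (Complex.sin (Real.pi * r)) := by
  set s := Complex.exp (Real.pi * r * I) with hs
  have hint : IsIntegral ℚ s := exp_integral r
  have hd : 2 * r.den - 1 + 1 = 2 * r.den := by
    have := r.pos
    omega
  have hmul : s * s ^ (2 * r.den - 1) = 1 := by
    rw [← pow_succ', hd, exp_pow_aux r]
  have hinv : s⁻¹ = s ^ (2 * r.den - 1) := inv_eq_of_mul_eq_one_right hmul
  have hsin : Complex.sin (Real.pi * r) = (s ^ (2 * r.den - 1) - s) * I * ((2 : ℂ))⁻¹ := by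
    rw [Complex.sin, ← hinv]
    rw [show (-(Real.pi * (r : ℂ)) * I) = -(Real.pi * r * I) by ring, Complex.exp_neg, ← hs]
    ring
  rw [hsin]
  have hI : IsIntegral ℚ (I : ℂ) := ⟨Polynomial.X ^ 2 + Polynomial.C 1,
    Polynomial.monic_X_pow_add_C 1 (by norm_num), by simp⟩
  have h2 : IsIntegral ℚ ((2 : ℂ))⁻¹ := by
    have := isIntegral_algebraMap (R := ℚ) (A := ℂ) (x := (2⁻¹ : ℚ))
    simpa using this
  exact ((((hint.pow _).sub hint).mul hI).mul h2).isAlgebraic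

theorem Gamma_isUnit_Hring (r : ℚ) (hr : ∀ k : ℕ, (r : ℂ) ≠ -(k : ℂ)) :
    Complex.Gamma (r : ℂ) ∈ Hring ∧ (Complex.Gamma (r : ℂ))⁻¹ ∈ Hring := by
  refine ⟨gamma_mem_Hring r hr, ?_⟩
  by_cases hZ : ∃ m : ℤ, (r : ℚ) = (m : ℚ)
  · -- r is a positive integer
    obtain ⟨m, hm⟩ := hZ
    have hm1 : 1 ≤ m := by
      by_contra h
      push_neg at h
      have hk : m = -(((-m).toNat : ℤ)) := by omega
      apply hr (-m).toNat
      rw [hm]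
      push_cast
      exact_mod_cast hk
    set n := (m - 1).toNat with hn
    have hmn : (m : ℂ) = (n : ℂ) + 1 := by
      have : (m : ℤ) = (n : ℤ) + 1 := by omega
      exact_mod_cast congrArg (Int.cast : ℤ → ℂ) this
    have hrc : (r : ℂ) = (n : ℂ) + 1 := by
      rw [hm]
      exact_mod_cast hmn
    rw [hrc, Complex.Gamma_nat_eq_factorial]
    refine alg_mem_Hring ?_
    have := isAlgebraic_rat (R := ℚ) (A := ℂ) ((n.factorial : ℚ)⁻¹)
    simpa using this
  · -- r is not an integer; use the reflection formula
    push_neg at hZ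
    have hπ : (Real.pi : ℂ) ≠ 0 := by
      exact_mod_cast Complex.ofReal_ne_zero.mpr Real.pi_ne_zero
    have hsin : Complex.sin (Real.pi * r) ≠ 0 := by
      rw [Complex.sin_ne_zero_iff]
      intro k hk
      apply hZ k
      have h2 : (r : ℂ) * Real.pi = (k : ℂ) * Real.pi := by
        rw [mul_comm]; exact hk
      have : (r : ℂ) = (k : ℂ) := mul_right_cancel₀ hπ h2
      exact_mod_cast this
    have hrefl := Complex.Gamma_mul_Gamma_one_sub (r : ℂ)
    have key : Complex.Gamma (r : ℂ) *
        (Complex.Gamma (((1 - r : ℚ)) : ℂ) * Complex.sin (Real.pi * r) * ((Real.pi : ℂ))⁻¹)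
        = 1 := by
      have h1r : (((1 - r : ℚ)) : ℂ) = 1 - (r : ℂ) := by push_cast; ring
      rw [h1r, show Complex.Gamma (r : ℂ) *
          (Complex.Gamma (1 - (r : ℂ)) * Complex.sin (Real.pi * r) * ((Real.pi : ℂ))⁻¹)
          = (Complex.Gamma (r : ℂ) * Complex.Gamma (1 - (r : ℂ)))
            * (Complex.sin (Real.pi * r) * ((Real.pi : ℂ))⁻¹) by ring, hrefl]
      field_simp
    rw [inv_eq_of_mul_eq_one_right key]
    refine Hring.mul_mem (Hring.mul_mem ?_ ?_) pi_inv_mem_Hring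
    · refine gamma_mem_Hring (1 - r) ?_
      intro k hk
      apply hZ (1 + k)
      have : (r : ℂ) = ((1 + (k : ℤ) : ℤ) : ℂ) := by
        push_cast at hk ⊢
        linear_combination -hk
      exact_mod_cast this
    · exact alg_mem_Hring (sin_pi_rat_algebraic r)
end

section
/- Let p ≥ 0, a₁,…,a_{p+1} ∈ ℚ \ ℤ_{≤0} and b₁,…,b_p ∈ ℚ \ ℤ_{≤0}, and let f(z) = ∑_{n≥0} ((a₁)_n⋯(a_{p+1})_n / ((1)_n(b₁)_n⋯(b_p)_n)) z^n, which converges for |z| < 1. Then the Laplace-type transform g(z) := (1/z)·f(1/z) = ∑_{n≥0} ((a₁)_n⋯(a_{p+1})_n / ((1)_n(b₁)_n⋯(b_p)_n)) z^{−n−1} satisfies: for Re(z) large enough, g(z) = ∫_0^∞ F(t)e^{−zt} dt where F(t) = ∑_{n≥0} ((a₁)_n⋯(a_{p+1})_n / ((1)_n(1)_n(b₁)_n⋯(b_p)_n)) t^n is entire. -/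
open Complex Finset MeasureTheory

lemma ascPoch_prod (n : ℕ) (x : ℂ) :
    (ascPochhammer ℂ n).eval x = ∏ k ∈ Finset.range n, (x + k) := by
  induction n with
  | zero => simp
  | succ n ih => rw [ascPochhammer_succ_eval, ih, Finset.prod_range_succ]

lemma exists_eps (w : ℂ) (hw : ∀ k : ℕ, w ≠ -(k : ℂ)) :
    ∃ ε : ℝ, 0 < ε ∧ ∀ k : ℕ, ε * (k + 1) ≤ ‖w + k‖ := by
  have hpos : ∀ k : ℕ, 0 < ‖w + k‖ := by
    intro k
    rw [norm_pos_iff]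
    intro h
    exact hw k (eq_neg_of_add_eq_zero_left h)
  set N : ℕ := ⌈2 * ‖w‖⌉₊ + 1 with hN
  have hNne : (Finset.range N).Nonempty := ⟨0, by simp [hN]⟩
  set ε : ℝ := min 4⁻¹ ((Finset.range N).inf' hNne fun k => ‖w + k‖ / (k + 1)) with hε
  refine ⟨ε, ?_, ?_⟩
  · refine lt_min (by norm_num) ?_
    rw [Finset.lt_inf'_iff]
    intro k _
    have := hpos k
    positivity
  · intro k
    by_cases hk : k < N
    · have h1 : ε ≤ ‖w + k‖ / (k + 1) :=
        le_trans (min_le_right _ _) (Finset.inf'_le _ (Finset.mem_range.mpr hk))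
      have hk1 : (0:ℝ) < (k:ℝ) + 1 := by positivity
      calc ε * (k + 1) ≤ (‖w + k‖ / (k + 1)) * (k + 1) := by
            exact mul_le_mul_of_nonneg_right h1 hk1.le
        _ = ‖w + k‖ := by field_simp
    · push_neg at hk
      have hk1 : 1 ≤ k := le_trans (by omega) hk
      have h2 : 2 * ‖w‖ ≤ (k : ℝ) := by
        calc 2 * ‖w‖ ≤ (⌈2 * ‖w‖⌉₊ : ℝ) := Nat.le_ceil _
          _ ≤ (k : ℝ) := by exact_mod_cast le_trans (by omega) hk
      have h3 : (k : ℝ) - ‖w‖ ≤ ‖w + k‖ := by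
        have h := norm_sub_norm_le ((k:ℂ)) (-w)
        simp only [sub_neg_eq_add, norm_neg] at h
        have hnk : ‖(k:ℂ)‖ = (k:ℝ) := by simp
        rw [hnk] at h
        linarith [h, (by rw [add_comm] : ‖(k:ℂ) + w‖ = ‖w + (k:ℂ)‖)]
      have h4 : ε ≤ 4⁻¹ := min_le_left _ _
      have hk1' : (1:ℝ) ≤ (k:ℝ) := by exact_mod_cast hk1
      have hkpos : (0:ℝ) ≤ (k:ℝ) + 1 := by positivity
      calc ε * (k + 1) ≤ 4⁻¹ * (k + 1) := mul_le_mul_of_nonneg_right h4 hkpos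
        _ ≤ (k : ℝ) - ‖w‖ := by nlinarith
        _ ≤ ‖w + k‖ := h3

lemma poch_upper (w : ℂ) (n : ℕ) :
    ‖(ascPochhammer ℂ n).eval w‖ ≤ (‖w‖ + 1) ^ n * (Nat.factorial n : ℝ) := by
  rw [ascPoch_prod, norm_prod]
  calc (∏ k ∈ Finset.range n, ‖w + k‖)
      ≤ (∏ k ∈ Finset.range n, (‖w‖ + 1) * ((k:ℝ) + 1)) := by
        refine Finset.prod_le_prod (fun k _ => norm_nonneg _) (fun k _ => ?_)
        calc ‖w + k‖ ≤ ‖w‖ + ‖(k:ℂ)‖ := norm_add_le _ _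
          _ = ‖w‖ + k := by simp
          _ ≤ (‖w‖ + 1) * ((k:ℝ) + 1) := by nlinarith [norm_nonneg w, Nat.cast_nonneg (α := ℝ) k]
    _ = (‖w‖ + 1) ^ n * (Nat.factorial n : ℝ) := by
        rw [Finset.prod_mul_distrib, Finset.prod_const, Finset.card_range]
        congr 1
        exact_mod_cast congrArg (Nat.cast : ℕ → ℝ) (Finset.prod_range_add_one_eq_factorial n)

lemma poch_lower (w : ℂ) {ε : ℝ} (hε : 0 < ε) (h : ∀ k : ℕ, ε * (k + 1) ≤ ‖w + k‖) (n : ℕ) :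
    ε ^ n * (Nat.factorial n : ℝ) ≤ ‖(ascPochhammer ℂ n).eval w‖ := by
  rw [ascPoch_prod, norm_prod]
  calc (ε ^ n * (Nat.factorial n : ℝ) : ℝ) = (∏ k ∈ Finset.range n, ε * ((k:ℝ) + 1)) := by
        rw [Finset.prod_mul_distrib, Finset.prod_const, Finset.card_range]
        congr 1
        exact_mod_cast (congrArg (Nat.cast : ℕ → ℝ) (Finset.prod_range_add_one_eq_factorial n)).symm
    _ ≤ (∏ k ∈ Finset.range n, ‖w + k‖) := by
        refine Finset.prod_le_prod (fun k _ => by positivity) (fun k _ => h k)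

lemma integrable_aux {z : ℂ} (hz : 0 < z.re) (n : ℕ) :
    IntegrableOn (fun t : ℝ => (t:ℂ) ^ n * Complex.exp (-z * t)) (Set.Ioi 0) := by
  have hg : IntegrableOn (fun t : ℝ => t ^ n * Real.exp (-z.re * t)) (Set.Ioi 0) := by
    have h := integrableOn_rpow_mul_exp_neg_mul_rpow (p := 1) (s := (n:ℝ)) (b := z.re)
      (by exact_mod_cast lt_of_lt_of_le neg_one_lt_zero (Nat.cast_nonneg n)) one_pos hz
    refine h.congr_fun (fun t ht => ?_) measurableSet_Ioi
    simp only [Real.rpow_one, Real.rpow_natCast]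
  refine Integrable.mono' hg ?_ ?_
  · exact (Continuous.aestronglyMeasurable (by continuity)).restrict
  · filter_upwards [ae_restrict_mem measurableSet_Ioi] with t ht
    rw [Set.mem_Ioi] at ht
    rw [norm_mul, norm_pow, Complex.norm_exp]
    simp [Complex.neg_re, Complex.mul_re, abs_of_pos ht]

lemma tendsto_aux {z : ℂ} (hz : 0 < z.re) (n : ℕ) (Cst : ℂ) :
    Filter.Tendsto (fun t : ℝ => Cst * (t:ℂ) ^ n * Complex.exp (-z * t))
      Filter.atTop (nhds 0) := by
  have h1 : Filter.Tendsto (fun t : ℝ => z.re * t) Filter.atTop Filter.atTop :=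
    Filter.Tendsto.const_mul_atTop hz Filter.tendsto_id
  have h2 := (Real.tendsto_pow_mul_exp_neg_atTop_nhds_zero n).comp h1
  have h3 : Filter.Tendsto
      (fun t : ℝ => (‖Cst‖ * ((z.re) ^ n)⁻¹) * ((z.re * t) ^ n * Real.exp (-(z.re * t))))
      Filter.atTop (nhds 0) := by
    simpa using h2.const_mul (‖Cst‖ * ((z.re) ^ n)⁻¹)
  refine squeeze_zero_norm' ?_ h3
  filter_upwards [Filter.eventually_ge_atTop 0] with t ht
  have hnorm : ‖Cst * (t:ℂ) ^ n * Complex.exp (-z * t)‖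
      = ‖Cst‖ * (t ^ n * Real.exp (-z.re * t)) := by
    rw [norm_mul, norm_mul, norm_pow, Complex.norm_exp]
    simp [Complex.neg_re, Complex.mul_re, _root_.abs_of_nonneg ht, mul_assoc]
  rw [hnorm]
  have hzr : z.re ≠ 0 := ne_of_gt hz
  have hneg : -(z.re * t) = -z.re * t := by ring
  rw [hneg, mul_pow]
  apply le_of_eq
  field_simp

lemma integral_pow_exp {z : ℂ} (hz : 0 < z.re) : ∀ n : ℕ,
    ∫ t in Set.Ioi (0:ℝ), (t:ℂ) ^ n * Complex.exp (-z * t)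
      = (Nat.factorial n : ℂ) / z ^ (n + 1) := by
  have hz0 : z ≠ 0 := fun h => by simp [h] at hz
  intro n
  induction n with
  | zero =>
    have hder : ∀ t : ℝ, HasDerivAt (fun t : ℝ => -z⁻¹ * Complex.exp (-z * t))
        (Complex.exp (-z * t)) t := by
      intro t
      have h1 : HasDerivAt (fun w : ℂ => -z * w) (-z) (t:ℂ) := by
        simpa using (hasDerivAt_id (t:ℂ)).const_mul (-z)
      have h2 := h1.cexp
      have h3 := h2.const_mul (-z⁻¹)
      have h4 : -z⁻¹ * (Complex.exp (-z * t) * -z) = Complex.exp (-z * t) := by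
        field_simp
      rw [h4] at h3
      exact h3.comp_ofReal
    have key := integral_Ioi_of_hasDerivAt_of_tendsto' (a := 0)
      (f := fun t : ℝ => -z⁻¹ * Complex.exp (-z * t))
      (f' := fun t : ℝ => Complex.exp (-z * t)) (m := 0)
      (fun x _ => hder x)
      (by simpa using integrable_aux hz 0)
      (by simpa using tendsto_aux hz 0 (-z⁻¹))
    simp only [pow_zero, one_mul]
    rw [key]
    norm_num
  | succ n ih =>
    have hder : ∀ t : ℝ, HasDerivAt (fun t : ℝ => -z⁻¹ * ((t:ℂ) ^ (n+1) * Complex.exp (-z * t)))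
        ((t:ℂ) ^ (n+1) * Complex.exp (-z * t)
          - ((n:ℂ) + 1) * z⁻¹ * ((t:ℂ) ^ n * Complex.exp (-z * t))) t := by
      intro t
      have h1 : HasDerivAt (fun w : ℂ => -z * w) (-z) (t:ℂ) := by
        simpa using (hasDerivAt_id (t:ℂ)).const_mul (-z)
      have h2 := h1.cexp
      have hp := hasDerivAt_pow (n+1) (t:ℂ)
      have h3 := (hp.mul h2).const_mul (-z⁻¹)
      have h4 : -z⁻¹ * ((↑(n+1) * (t:ℂ) ^ (n + 1 - 1)) * Complex.exp (-z * t)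
            + (t:ℂ) ^ (n+1) * (Complex.exp (-z * t) * -z))
          = (t:ℂ) ^ (n+1) * Complex.exp (-z * t)
            - ((n:ℂ) + 1) * z⁻¹ * ((t:ℂ) ^ n * Complex.exp (-z * t)) := by
        push_cast
        field_simp
        ring
      rw [h4] at h3
      exact h3.comp_ofReal
    have hint : IntegrableOn (fun t : ℝ => (t:ℂ) ^ (n+1) * Complex.exp (-z * t)
        - ((n:ℂ) + 1) * z⁻¹ * ((t:ℂ) ^ n * Complex.exp (-z * t))) (Set.Ioi 0) :=
      (integrable_aux hz (n+1)).sub ((integrable_aux hz n).const_mul _)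
    have key := integral_Ioi_of_hasDerivAt_of_tendsto' (a := 0)
      (f := fun t : ℝ => -z⁻¹ * ((t:ℂ) ^ (n+1) * Complex.exp (-z * t)))
      (f' := fun t : ℝ => (t:ℂ) ^ (n+1) * Complex.exp (-z * t)
        - ((n:ℂ) + 1) * z⁻¹ * ((t:ℂ) ^ n * Complex.exp (-z * t))) (m := 0)
      (fun x _ => hder x) hint
      (by simpa [mul_assoc] using tendsto_aux hz (n+1) (-z⁻¹))
    simp only [Complex.ofReal_zero, zero_pow (Nat.succ_ne_zero n), zero_mul, mul_zero, sub_zero,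
      zero_sub, neg_zero] at key
    rw [integral_sub (integrable_aux hz (n+1)) ((integrable_aux hz n).const_mul _),
      integral_const_mul, ih] at key
    have hfact : ((n:ℂ) + 1) * z⁻¹ * ((Nat.factorial n : ℂ) / z ^ (n + 1))
        = (Nat.factorial (n+1) : ℂ) / z ^ (n + 1 + 1) := by
      rw [Nat.factorial_succ]
      push_cast
      rw [pow_succ, div_mul_eq_div_div, mul_comm ((n:ℂ) + 1) z⁻¹, mul_assoc,
        ← div_eq_inv_mul, div_div]
      rw [mul_div_assoc', div_div]
      congr 1
    have := sub_eq_zero.mp key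
    rw [this, hfact]

lemma real_integral {x : ℝ} (hx : 0 < x) (n : ℕ) :
    ∫ t in Set.Ioi (0:ℝ), t ^ n * Real.exp (-x * t)
      = (Nat.factorial n : ℝ) / x ^ (n + 1) := by
  have h := integral_pow_exp (z := (x:ℂ)) (by simpa using hx) n
  have heq : (fun t : ℝ => (t:ℂ) ^ n * Complex.exp (-(x:ℂ) * t))
      = fun t : ℝ => ((t ^ n * Real.exp (-x * t) : ℝ) : ℂ) := by
    funext t
    push_cast [Complex.ofReal_exp]
    ring
  have h3 := _root_.integral_ofReal (𝕜 := ℂ) (μ := volume.restrict (Set.Ioi 0))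
    (f := fun t : ℝ => t ^ n * Real.exp (-x * t))
  rw [heq] at h
  have h4 : ((∫ t in Set.Ioi (0:ℝ), t ^ n * Real.exp (-x * t) : ℝ) : ℂ)
      = (((Nat.factorial n : ℝ) / x ^ (n + 1) : ℝ) : ℂ) := by
    exact (h3.symm.trans h).trans (by push_cast; ring)
  exact Complex.ofReal_inj.mp h4

theorem laplace_transform_of_hypergeometric (p : ℕ)
    (a : Fin (p + 1) → ℚ) (b : Fin p → ℚ)
    (ha : ∀ i, ∀ k : ℕ, (a i : ℂ) ≠ -(k : ℂ))
    (hb : ∀ i, ∀ k : ℕ, (b i : ℂ) ≠ -(k : ℂ))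
    (c : ℕ → ℂ)
    (hc : c = fun n => (∏ i, (ascPochhammer ℂ n).eval ((a i : ℂ))) /
      ((Nat.factorial n : ℂ) * ∏ i, (ascPochhammer ℂ n).eval ((b i : ℂ))))
    (F : ℝ → ℂ)
    (hF : F = fun t : ℝ => ∑' n : ℕ, c n * (t : ℂ) ^ n / (Nat.factorial n : ℂ)) :
    ∃ C : ℝ, ∀ z : ℂ, C < z.re →
      ∑' n : ℕ, c n / z ^ (n + 1) =
        ∫ t in Set.Ioi (0 : ℝ), F t * Complex.exp (-z * t) := by
  choose ε hεpos hεle using fun i : Fin p => exists_eps _ (hb i)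
  set K : ℝ := ∏ i : Fin (p+1), (‖((a i : ℂ))‖ + 1) with hK
  set E : ℝ := ∏ i : Fin p, ε i with hE
  have hKpos : 0 < K := Finset.prod_pos (fun i _ => by positivity)
  have hEpos : 0 < E := Finset.prod_pos (fun i _ => hεpos i)
  set R : ℝ := K / E with hR
  have hRpos : 0 < R := div_pos hKpos hEpos
  refine ⟨R, fun z hzR => ?_⟩
  have hx : 0 < z.re := lt_trans hRpos hzR
  have hz0 : z ≠ 0 := by
    intro h
    rw [h] at hx
    simp at hx
  have hfactC : ∀ n : ℕ, (Nat.factorial n : ℂ) ≠ 0 :=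
    fun n => Nat.cast_ne_zero.mpr (Nat.factorial_ne_zero n)
  have hfactR : ∀ n : ℕ, (0:ℝ) < (Nat.factorial n : ℝ) :=
    fun n => by exact_mod_cast Nat.factorial_pos n
  -- norm bound on coefficients
  have hcb : ∀ n : ℕ, ‖c n‖ ≤ R ^ n := by
    intro n
    rw [hc]
    simp only [norm_div, norm_mul, norm_prod, Complex.norm_natCast]
    have hnum : (∏ i, ‖(ascPochhammer ℂ n).eval ((a i : ℂ))‖)
        ≤ K ^ n * (Nat.factorial n : ℝ) ^ (p+1) := by
      calc (∏ i, ‖(ascPochhammer ℂ n).eval ((a i : ℂ))‖)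
          ≤ (∏ i : Fin (p+1), (‖((a i : ℂ))‖ + 1) ^ n * (Nat.factorial n : ℝ)) :=
            Finset.prod_le_prod (fun i _ => norm_nonneg _) (fun i _ => poch_upper _ n)
        _ = K ^ n * (Nat.factorial n : ℝ) ^ (p+1) := by
            rw [Finset.prod_mul_distrib, Finset.prod_const, Finset.prod_pow, Finset.card_univ,
              Fintype.card_fin]
    have hden : E ^ n * (Nat.factorial n : ℝ) ^ (p+1)
        ≤ (Nat.factorial n : ℝ) * ∏ i, ‖(ascPochhammer ℂ n).eval ((b i : ℂ))‖ := by
      have h1 : (∏ i : Fin p, (ε i) ^ n * (Nat.factorial n : ℝ))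
          ≤ ∏ i, ‖(ascPochhammer ℂ n).eval ((b i : ℂ))‖ :=
        Finset.prod_le_prod (fun i _ => by have := hεpos i; positivity) (fun i _ => poch_lower _ (hεpos i) (hεle i) n)
      have h2 : (∏ i : Fin p, (ε i) ^ n * (Nat.factorial n : ℝ))
          = E ^ n * (Nat.factorial n : ℝ) ^ p := by
        rw [Finset.prod_mul_distrib, Finset.prod_const, Finset.prod_pow, Finset.card_univ,
          Fintype.card_fin]
      calc E ^ n * (Nat.factorial n : ℝ) ^ (p+1)
          = (Nat.factorial n : ℝ) * (E ^ n * (Nat.factorial n : ℝ) ^ p) := by ring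
        _ ≤ (Nat.factorial n : ℝ) * ∏ i, ‖(ascPochhammer ℂ n).eval ((b i : ℂ))‖ := by
            rw [← h2]
            exact mul_le_mul_of_nonneg_left h1 (hfactR n).le
    have hdpos : (0:ℝ) < E ^ n * (Nat.factorial n : ℝ) ^ (p+1) := by positivity
    calc (∏ i, ‖(ascPochhammer ℂ n).eval ((a i : ℂ))‖) /
          ((Nat.factorial n : ℝ) * ∏ i, ‖(ascPochhammer ℂ n).eval ((b i : ℂ))‖)
        ≤ (K ^ n * (Nat.factorial n : ℝ) ^ (p+1)) / (E ^ n * (Nat.factorial n : ℝ) ^ (p+1)) :=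
          div_le_div₀ (by positivity) hnum hdpos hden
      _ = R ^ n := by
          rw [hR, div_pow, mul_div_mul_right _ _ (by positivity : ((Nat.factorial n : ℝ) ^ (p+1)) ≠ 0)]
  -- the terms
  set f : ℕ → ℝ → ℂ :=
    fun n t => (c n / (Nat.factorial n : ℂ)) * ((t:ℂ) ^ n * Complex.exp (-z * t)) with hfdef
  have hfint : ∀ n, Integrable (f n) (volume.restrict (Set.Ioi (0:ℝ))) :=
    fun n => (integrable_aux hx n).const_mul _
  have hnormint : ∀ n : ℕ,
      (∫ t, ‖f n t‖ ∂(volume.restrict (Set.Ioi (0:ℝ)))) = ‖c n‖ / z.re ^ (n+1) := by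
    intro n
    have heqn : Set.EqOn (fun t : ℝ => ‖f n t‖)
        (fun t : ℝ => (‖c n‖ / (Nat.factorial n : ℝ)) * (t ^ n * Real.exp (-z.re * t)))
        (Set.Ioi 0) := by
      intro t ht
      rw [Set.mem_Ioi] at ht
      simp only [hfdef, norm_mul, norm_div, norm_pow, Complex.norm_natCast,
        Complex.norm_exp]
      simp [Complex.neg_re, Complex.mul_re, _root_.abs_of_pos ht, mul_assoc]
    rw [setIntegral_congr_fun measurableSet_Ioi heqn, integral_const_mul, real_integral hx n]
    rw [div_mul_div_comm, mul_comm (‖c n‖) _, mul_div_mul_left _ _ (hfactR n).ne']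
  have hsum : Summable (fun n : ℕ => ∫ t, ‖f n t‖ ∂(volume.restrict (Set.Ioi (0:ℝ)))) := by
    rw [summable_congr hnormint]
    refine Summable.of_nonneg_of_le (fun n => by positivity) (fun n => ?_)
      (((summable_geometric_of_lt_one (by positivity) ((div_lt_one hx).mpr hzR)).mul_right
        (1 / z.re)))
    rw [div_pow, div_mul_div_comm, mul_one, ← pow_succ]
    gcongr
    exact hcb n
  have hswap := integral_tsum_of_summable_integral_norm hfint hsum
  have hterm : ∀ n : ℕ,
      (∫ t, f n t ∂(volume.restrict (Set.Ioi (0:ℝ)))) = c n / z ^ (n+1) := by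
    intro n
    rw [hfdef]
    simp only
    rw [integral_const_mul, integral_pow_exp hx n, div_mul_div_comm,
      mul_comm (c n) _, mul_div_mul_left _ _ (hfactC n)]
  have hFt : ∀ t : ℝ, (∑' n, f n t) = F t * Complex.exp (-z * t) := by
    intro t
    rw [hF]
    rw [← tsum_mul_right]
    exact tsum_congr fun n => by rw [hfdef]; ring
  calc ∑' n : ℕ, c n / z ^ (n + 1)
      = ∑' n : ℕ, ∫ t, f n t ∂(volume.restrict (Set.Ioi (0:ℝ))) :=
        tsum_congr fun n => (hterm n).symm
    _ = ∫ t, (∑' n, f n t) ∂(volume.restrict (Set.Ioi (0:ℝ))) := hswap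
    _ = ∫ t in Set.Ioi (0:ℝ), F t * Complex.exp (-z * t) := by
        refine integral_congr_ae (Filter.Eventually.of_forall fun t => hFt t)
end
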